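/- Let G : [0,∞) → Sym_r(ℝ) be a continuous curve of symmetric positive semi-definite matrices, and let A solve A'(t) = a G(t)(I_r - G(t)) with A(0) = G(0), a > 0. Then for every i ∈ [r] and every t ≥ 0 such that θ_max(G(s)) ≤ 1/2 for all s ≤ t, one has θ_i(G(0)) + a ∫₀ᵗ (θ_min(G(s)) - θ_min(G(s))²) ds ≤ μ_i(A(t)) ≤ θ_i(G(0)) + a ∫₀ᵗ (θ_max(G(s)) - θ_max(G(s))²) ds. -/

import Mathlib

open Matrix MeasureTheory

/-- The eigenvalues of a real symmetric matrix, sorted in increasing order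
(junk value `0` if the matrix is not symmetric). -/
noncomputable def sortedEigs {r : ℕ} (A : Matrix (Fin r) (Fin r) ℝ) (i : Fin r) : ℝ :=
  if hA : A.IsHermitian then
    ((Finset.univ.val.map hA.eigenvalues).sort (· ≤ ·)).getD i 0
  else 0

/-- The smallest eigenvalue of a real symmetric matrix (junk value if not symmetric). -/
noncomputable def eigMinOf {r : ℕ} (A : Matrix (Fin r) (Fin r) ℝ) : ℝ :=
  ⨅ i : Fin r, (if hA : A.IsHermitian then hA.eigenvalues i else 0)

/-- The largest eigenvalue of a real symmetric matrix (junk value if not symmetric). -/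
noncomputable def eigMaxOf {r : ℕ} (A : Matrix (Fin r) (Fin r) ℝ) : ℝ :=
  ⨆ i : Fin r, (if hA : A.IsHermitian then hA.eigenvalues i else 0)

/-!
For a fixed vector `x`, the quadratic form `x ⬝ᵥ A s *ᵥ x` has derivative
`a * x ⬝ᵥ (G s * (1 - G s)) *ᵥ x`. In an orthonormal eigenbasis of `G s` this is a weighted sum of
the numbers `a (θ - θ²)` over the eigenvalues `θ` of `G s`, and since `θ ↦ θ - θ²` is increasing
on `(-∞, 1/2]` it lies between `a (θ_min - θ_min²) ‖x‖²` and `a (θ_max - θ_max²) ‖x‖²`.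
Integrating gives `A 0 + c_lo • 1 ≤ A t ≤ A 0 + c_hi • 1` as quadratic forms. The Courant–Fischer
dimension count turns such a comparison into one of the `i`-th smallest eigenvalues: some nonzero
vector is orthogonal to the `i` lowest eigenvectors of one matrix and to the `r - 1 - i` highest
eigenvectors of the other. The same comparison makes each sorted eigenvalue `1`-Lipschitz in the
operator norm, which gives the continuity of the integrands.
-/

namespace Matrix

variable {n : Type*} [Fintype n]

theorem sum_dotProduct_smul_eq (b : OrthonormalBasis n ℝ (EuclideanSpace ℝ n)) (x : n → ℝ) :
    ∑ j, (b j ⬝ᵥ x) • ⇑(b j) = x := by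
  have := congrArg WithLp.ofLp (b.sum_repr' (WithLp.toLp 2 x))
  simpa [EuclideanSpace.inner_eq_star_dotProduct, dotProduct_comm] using this

theorem dotProduct_mulVec_eq_sum {M : Matrix n n ℝ}
    {b : OrthonormalBasis n ℝ (EuclideanSpace ℝ n)} {μ : n → ℝ}
    (hb : ∀ j, M *ᵥ b j = μ j • ⇑(b j)) (x : n → ℝ) :
    x ⬝ᵥ M *ᵥ x = ∑ j, μ j * (b j ⬝ᵥ x) ^ 2 := by
  nth_rw 2 [← sum_dotProduct_smul_eq b x]
  rw [mulVec_sum, dotProduct_sum]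
  refine Finset.sum_congr rfl fun j _ => ?_
  rw [mulVec_smul, hb, dotProduct_smul, dotProduct_smul, dotProduct_comm, smul_eq_mul,
    smul_eq_mul]
  ring

theorem dotProduct_self_eq_sum (b : OrthonormalBasis n ℝ (EuclideanSpace ℝ n)) (x : n → ℝ) :
    x ⬝ᵥ x = ∑ j, (b j ⬝ᵥ x) ^ 2 := by
  classical
  simpa using dotProduct_mulVec_eq_sum (M := 1) (μ := 1) (fun j => by simp) x

theorem mul_dotProduct_self_le_dotProduct_mulVec {M : Matrix n n ℝ}
    {b : OrthonormalBasis n ℝ (EuclideanSpace ℝ n)} {μ : n → ℝ}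
    (hb : ∀ j, M *ᵥ b j = μ j • ⇑(b j)) {θ : ℝ} {x : n → ℝ}
    (h : ∀ j, b j ⬝ᵥ x ≠ 0 → θ ≤ μ j) :
    θ * (x ⬝ᵥ x) ≤ x ⬝ᵥ M *ᵥ x := by
  rw [dotProduct_mulVec_eq_sum hb, dotProduct_self_eq_sum b, Finset.mul_sum]
  refine Finset.sum_le_sum fun j _ => ?_
  by_cases hj : b j ⬝ᵥ x = 0
  · simp [hj]
  · exact mul_le_mul_of_nonneg_right (h j hj) (sq_nonneg _)

theorem dotProduct_mulVec_le_mul_dotProduct_self {M : Matrix n n ℝ}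
    {b : OrthonormalBasis n ℝ (EuclideanSpace ℝ n)} {μ : n → ℝ}
    (hb : ∀ j, M *ᵥ b j = μ j • ⇑(b j)) {θ : ℝ} {x : n → ℝ}
    (h : ∀ j, b j ⬝ᵥ x ≠ 0 → μ j ≤ θ) :
    x ⬝ᵥ M *ᵥ x ≤ θ * (x ⬝ᵥ x) := by
  rw [dotProduct_mulVec_eq_sum hb, dotProduct_self_eq_sum b, Finset.mul_sum]
  refine Finset.sum_le_sum fun j _ => ?_
  by_cases hj : b j ⬝ᵥ x = 0
  · simp [hj]
  · exact mul_le_mul_of_nonneg_right (h j hj) (sq_nonneg _)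

theorem exists_ne_zero_forall_dotProduct_eq_zero {K ι : Type*} [Field K] [Fintype ι]
    (u : ι → n → K) (h : Fintype.card ι < Fintype.card n) :
    ∃ x ≠ 0, ∀ j, u j ⬝ᵥ x = 0 := by
  have hker := LinearMap.ker_ne_bot_of_finrank_lt (f := (Matrix.of u).mulVecLin)
    (by simpa using h)
  obtain ⟨x, hx, hx0⟩ := (Submodule.ne_bot_iff _).mp hker
  exact ⟨x, hx0, fun j => congrFun hx j⟩

theorem smul_mul_one_sub_mulVec_of_mulVec_eq [DecidableEq n] {M : Matrix n n ℝ} {v : n → ℝ}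
    {μ : ℝ} (hv : M *ᵥ v = μ • v) (a : ℝ) :
    (a • (M * (1 - M))) *ᵥ v = (a * (μ - μ ^ 2)) • v := by
  rw [smul_mulVec, ← mulVec_mulVec, sub_mulVec, one_mulVec, hv, mulVec_sub, mulVec_smul, hv,
    smul_smul]
  module

theorem hasDerivAt_dotProduct_mulVec {A : ℝ → Matrix n n ℝ} {A' : Matrix n n ℝ} {t : ℝ}
    (h : ∀ i j, HasDerivAt (fun s => A s i j) (A' i j) t) (x : n → ℝ) :
    HasDerivAt (fun s => x ⬝ᵥ A s *ᵥ x) (x ⬝ᵥ A' *ᵥ x) t := by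
  simp only [dotProduct, mulVec, Finset.mul_sum]
  exact HasDerivAt.fun_sum fun i _ => HasDerivAt.fun_sum fun j _ =>
    ((h i j).mul_const (x j)).const_mul (x i)

section Integral

variable {A B : ℝ → Matrix n n ℝ} {t₀ t : ℝ}

theorem dotProduct_mulVec_le_add_integral {hi : ℝ → ℝ} (hle : t₀ ≤ t)
    (hA : ∀ s ∈ Set.Icc t₀ t, ∀ i j, HasDerivAt (fun s => A s i j) (B s i j) s)
    (hhi : IntegrableOn hi (Set.Icc t₀ t))
    (hB : ∀ s ∈ Set.Icc t₀ t, ∀ x, x ⬝ᵥ B s *ᵥ x ≤ hi s * (x ⬝ᵥ x)) (x : n → ℝ) :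
    x ⬝ᵥ A t *ᵥ x ≤ x ⬝ᵥ A t₀ *ᵥ x + (∫ s in t₀..t, hi s) * (x ⬝ᵥ x) := by
  have hq s (hs : s ∈ Set.Icc t₀ t) := hasDerivAt_dotProduct_mulVec (hA s hs) x
  have := intervalIntegral.sub_le_integral_of_hasDeriv_right_of_le hle
    (fun s hs => (hq s hs).continuousAt.continuousWithinAt)
    (fun s hs => (hq s (Set.Ioo_subset_Icc_self hs)).hasDerivWithinAt)
    (hhi.mul_const (x ⬝ᵥ x))
    (fun s hs => hB s (Set.Ioo_subset_Icc_self hs) x)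
  rw [intervalIntegral.integral_mul_const] at this
  linarith

theorem add_integral_le_dotProduct_mulVec {lo : ℝ → ℝ} (hle : t₀ ≤ t)
    (hA : ∀ s ∈ Set.Icc t₀ t, ∀ i j, HasDerivAt (fun s => A s i j) (B s i j) s)
    (hlo : IntegrableOn lo (Set.Icc t₀ t))
    (hB : ∀ s ∈ Set.Icc t₀ t, ∀ x, lo s * (x ⬝ᵥ x) ≤ x ⬝ᵥ B s *ᵥ x) (x : n → ℝ) :
    x ⬝ᵥ A t₀ *ᵥ x + (∫ s in t₀..t, lo s) * (x ⬝ᵥ x) ≤ x ⬝ᵥ A t *ᵥ x := by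
  have hq s (hs : s ∈ Set.Icc t₀ t) := hasDerivAt_dotProduct_mulVec (hA s hs) x
  have := intervalIntegral.integral_le_sub_of_hasDeriv_right_of_le hle
    (fun s hs => (hq s hs).continuousAt.continuousWithinAt)
    (fun s hs => (hq s (Set.Ioo_subset_Icc_self hs)).hasDerivWithinAt)
    (hlo.mul_const (x ⬝ᵥ x))
    (fun s hs => hB s (Set.Ioo_subset_Icc_self hs) x)
  rw [intervalIntegral.integral_mul_const] at this
  linarith

end Integral

section L2OpNorm

open scoped Matrix.Norms.L2Operator

variable [DecidableEq n]

theorem dotProduct_mulVec_le_l2_opNorm_mul (D : Matrix n n ℝ) (x : n → ℝ) :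
    x ⬝ᵥ D *ᵥ x ≤ ‖D‖ * (x ⬝ᵥ x) := by
  set y : EuclideanSpace ℝ n := WithLp.toLp 2 x
  have hy : x ⬝ᵥ x = ‖y‖ ^ 2 := by
    rw [← real_inner_self_eq_norm_sq, EuclideanSpace.inner_eq_star_dotProduct]
    simp [y]
  calc x ⬝ᵥ D *ᵥ x = inner ℝ y ((EuclideanSpace.equiv n ℝ).symm (D *ᵥ y)) := by
        simp [y, EuclideanSpace.inner_eq_star_dotProduct, dotProduct_comm]
    _ ≤ ‖y‖ * ‖(EuclideanSpace.equiv n ℝ).symm (D *ᵥ y)‖ := real_inner_le_norm _ _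
    _ ≤ ‖y‖ * (‖D‖ * ‖y‖) := by gcongr; exact l2_opNorm_mulVec D y
    _ = ‖D‖ * (x ⬝ᵥ x) := by rw [hy]; ring

end L2OpNorm

end Matrix

theorem Multiset.sort_map_univ_eq_ofFn {α : Type*} [LinearOrder α] {r : ℕ} (f : Fin r → α) :
    (Finset.univ.val.map f).sort (· ≤ ·) = List.ofFn (f ∘ Tuple.sort f) := by
  refine List.Perm.eq_of_pairwise' (Multiset.pairwise_sort ..) ?_ ?_
  · rw [← List.sortedLE_iff_pairwise, List.sortedLE_ofFn_iff]
    exact Tuple.monotone_sort f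
  · rw [← Multiset.coe_eq_coe, Multiset.sort_eq, ← Fin.univ_val_map, ← Multiset.map_map,
      Multiset.map_univ_val_equiv]

section SortedEigs

variable {r : ℕ} {M N : Matrix (Fin r) (Fin r) ℝ}

theorem sortedEigs_eq (hM : M.IsHermitian) (i : Fin r) :
    sortedEigs M i = hM.eigenvalues (Tuple.sort hM.eigenvalues i) := by
  rw [sortedEigs, dif_pos hM, Multiset.sort_map_univ_eq_ofFn, List.getD_eq_getElem?_getD]
  simp

theorem sortedEigs_monotone : Monotone (sortedEigs M) := by
  by_cases hM : M.IsHermitian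
  · rw [funext (sortedEigs_eq hM)]
    exact Tuple.monotone_sort hM.eigenvalues
  · intro i j _
    simp only [sortedEigs, dif_neg hM, le_refl]

theorem eigMinOf_eq_sortedEigs_bot [NeZero r] (hM : M.IsHermitian) :
    eigMinOf M = sortedEigs M ⊥ := by
  simp only [eigMinOf, dif_pos hM]
  rw [← (Tuple.sort hM.eigenvalues).iInf_comp]
  simp only [← sortedEigs_eq hM]
  exact le_antisymm (ciInf_le (Set.finite_range _).bddBelow ⊥)
    (le_ciInf fun k => sortedEigs_monotone bot_le)

theorem eigMaxOf_eq_sortedEigs_top [NeZero r] (hM : M.IsHermitian) :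
    eigMaxOf M = sortedEigs M ⊤ := by
  simp only [eigMaxOf, dif_pos hM]
  rw [← (Tuple.sort hM.eigenvalues).iSup_comp]
  simp only [← sortedEigs_eq hM]
  exact le_antisymm (ciSup_le fun k => sortedEigs_monotone le_top)
    (le_ciSup (Set.finite_range _).bddAbove ⊤)

noncomputable def sortedEigenbasis (hM : M.IsHermitian) :
    OrthonormalBasis (Fin r) ℝ (EuclideanSpace ℝ (Fin r)) :=
  hM.eigenvectorBasis.reindex (Tuple.sort hM.eigenvalues).symm

theorem mulVec_sortedEigenbasis (hM : M.IsHermitian) (k : Fin r) :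
    M *ᵥ sortedEigenbasis hM k = sortedEigs M k • ⇑(sortedEigenbasis hM k) := by
  rw [sortedEigenbasis, OrthonormalBasis.reindex_apply, Equiv.symm_symm, sortedEigs_eq hM,
    hM.mulVec_eigenvectorBasis]

theorem sortedEigs_mul_le_of_forall_lt {x : Fin r → ℝ} (hM : M.IsHermitian) {i : Fin r}
    (hx : ∀ k < i, sortedEigenbasis hM k ⬝ᵥ x = 0) :
    sortedEigs M i * (x ⬝ᵥ x) ≤ x ⬝ᵥ M *ᵥ x :=
  mul_dotProduct_self_le_dotProduct_mulVec (mulVec_sortedEigenbasis hM) fun k hk =>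
    sortedEigs_monotone (not_lt.mp fun hki => hk (hx k hki))

theorem le_sortedEigs_mul_of_forall_gt {x : Fin r → ℝ} (hM : M.IsHermitian) {i : Fin r}
    (hx : ∀ k > i, sortedEigenbasis hM k ⬝ᵥ x = 0) :
    x ⬝ᵥ M *ᵥ x ≤ sortedEigs M i * (x ⬝ᵥ x) :=
  dotProduct_mulVec_le_mul_dotProduct_self (mulVec_sortedEigenbasis hM) fun k hk =>
    sortedEigs_monotone (not_lt.mp fun hik => hk (hx k hik))

theorem sortedEigs_le_add_of_forall_dotProduct_mulVec_le (hM : M.IsHermitian)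
    (hN : N.IsHermitian) {c : ℝ} (h : ∀ x, x ⬝ᵥ N *ᵥ x ≤ x ⬝ᵥ M *ᵥ x + c * (x ⬝ᵥ x))
    (i : Fin r) : sortedEigs N i ≤ sortedEigs M i + c := by
  obtain ⟨x, hx0, hx⟩ := exists_ne_zero_forall_dotProduct_eq_zero
    (fun k : {k // k ≠ i} =>
      if k.1 < i then ⇑(sortedEigenbasis hN k) else ⇑(sortedEigenbasis hM k))
    (by simpa [Fintype.card_subtype_compl] using Nat.sub_lt i.pos one_pos)
  have hNx : sortedEigs N i * (x ⬝ᵥ x) ≤ x ⬝ᵥ N *ᵥ x :=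
    sortedEigs_mul_le_of_forall_lt hN fun k hk => by simpa [hk] using hx ⟨k, hk.ne⟩
  have hMx : x ⬝ᵥ M *ᵥ x ≤ sortedEigs M i * (x ⬝ᵥ x) :=
    le_sortedEigs_mul_of_forall_gt hM fun k hk => by simpa [hk.not_gt] using hx ⟨k, hk.ne'⟩
  have hx_pos : 0 < x ⬝ᵥ x :=
    (Finset.sum_nonneg fun k _ => mul_self_nonneg (x k)).lt_of_ne'
      (dotProduct_self_eq_zero.not.mpr hx0)
  refine le_of_mul_le_mul_right ?_ hx_pos
  linarith [h x]

section L2OpNorm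

open scoped Matrix.Norms.L2Operator

theorem lipschitzOnWith_sortedEigs (i : Fin r) :
    LipschitzOnWith 1 (fun M : Matrix (Fin r) (Fin r) ℝ => sortedEigs M i) {M | M.IsHermitian} :=
  LipschitzOnWith.of_le_add_mul 1 fun M hM N hN => by
    have hMN x : x ⬝ᵥ M *ᵥ x ≤ x ⬝ᵥ N *ᵥ x + ‖M - N‖ * (x ⬝ᵥ x) := by
      have := dotProduct_mulVec_le_l2_opNorm_mul (M - N) x
      rw [sub_mulVec, dotProduct_sub] at this
      linarith
    simpa [dist_eq_norm] using sortedEigs_le_add_of_forall_dotProduct_mulVec_le hN hM hMN i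

theorem ContinuousOn.sortedEigs {X : Type*} [TopologicalSpace X]
    {G : X → Matrix (Fin r) (Fin r) ℝ} {s : Set X} (hG : ContinuousOn G s)
    (hs : ∀ t ∈ s, (G t).IsHermitian) (i : Fin r) :
    ContinuousOn (fun t => sortedEigs (G t) i) s :=
  (lipschitzOnWith_sortedEigs i).continuousOn.comp hG hs

end L2OpNorm

end SortedEigs

section SortedEigsIntegral

variable {r : ℕ} {A B : ℝ → Matrix (Fin r) (Fin r) ℝ} {t₀ t : ℝ}

theorem sortedEigs_le_add_integral {hi : ℝ → ℝ} (hle : t₀ ≤ t) (hA₀ : (A t₀).IsHermitian)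
    (hAt : (A t).IsHermitian)
    (hA : ∀ s ∈ Set.Icc t₀ t, ∀ i j, HasDerivAt (fun s => A s i j) (B s i j) s)
    (hhi : IntegrableOn hi (Set.Icc t₀ t))
    (hB : ∀ s ∈ Set.Icc t₀ t, ∀ x, x ⬝ᵥ B s *ᵥ x ≤ hi s * (x ⬝ᵥ x)) (i : Fin r) :
    sortedEigs (A t) i ≤ sortedEigs (A t₀) i + ∫ s in t₀..t, hi s :=
  sortedEigs_le_add_of_forall_dotProduct_mulVec_le hA₀ hAt
    (dotProduct_mulVec_le_add_integral hle hA hhi hB) i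

theorem add_integral_le_sortedEigs {lo : ℝ → ℝ} (hle : t₀ ≤ t) (hA₀ : (A t₀).IsHermitian)
    (hAt : (A t).IsHermitian)
    (hA : ∀ s ∈ Set.Icc t₀ t, ∀ i j, HasDerivAt (fun s => A s i j) (B s i j) s)
    (hlo : IntegrableOn lo (Set.Icc t₀ t))
    (hB : ∀ s ∈ Set.Icc t₀ t, ∀ x, lo s * (x ⬝ᵥ x) ≤ x ⬝ᵥ B s *ᵥ x) (i : Fin r) :
    sortedEigs (A t₀) i + ∫ s in t₀..t, lo s ≤ sortedEigs (A t) i := by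
  have := sortedEigs_le_add_of_forall_dotProduct_mulVec_le hAt hA₀ (c := -∫ s in t₀..t, lo s)
    (fun x => by linarith [add_integral_le_dotProduct_mulVec hle hA hlo hB x]) i
  linarith

end SortedEigsIntegral

theorem dotProduct_smul_mul_one_sub_mulVec_bounds {r : ℕ} [NeZero r]
    {M : Matrix (Fin r) (Fin r) ℝ} (hM : M.IsHermitian) (hmax : eigMaxOf M ≤ 1 / 2) {a : ℝ}
    (ha : 0 ≤ a) (x : Fin r → ℝ) :
    a * (eigMinOf M - eigMinOf M ^ 2) * (x ⬝ᵥ x) ≤ x ⬝ᵥ (a • (M * (1 - M))) *ᵥ x ∧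
      x ⬝ᵥ (a • (M * (1 - M))) *ᵥ x ≤ a * (eigMaxOf M - eigMaxOf M ^ 2) * (x ⬝ᵥ x) := by
  have hb k := smul_mul_one_sub_mulVec_of_mulVec_eq (mulVec_sortedEigenbasis hM k) a
  have hf : MonotoneOn (fun θ : ℝ => a * (θ - θ ^ 2)) (Set.Iic (1 / 2)) :=
    fun p hp q hq hpq => by
      simp only [Set.mem_Iic] at hp hq
      nlinarith [mul_nonneg ha (mul_nonneg (sub_nonneg.mpr hpq) (by linarith : 0 ≤ 1 - p - q))]
  rw [eigMaxOf_eq_sortedEigs_top hM] at hmax ⊢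
  rw [eigMinOf_eq_sortedEigs_bot hM]
  have hle k : sortedEigs M k ≤ 1 / 2 := (sortedEigs_monotone le_top).trans hmax
  exact ⟨mul_dotProduct_self_le_dotProduct_mulVec hb fun k _ =>
      hf (hle ⊥) (hle k) (sortedEigs_monotone bot_le),
    dotProduct_mulVec_le_mul_dotProduct_self hb fun k _ =>
      hf (hle k) (hle ⊤) (sortedEigs_monotone le_top)⟩

theorem matrix_riccati_eigenvalue_comparison_small_general
    {r : ℕ} (a : ℝ) (ha : 0 < a)
    (G A : ℝ → Matrix (Fin r) (Fin r) ℝ)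
    (hGcont : ∀ i j, Continuous fun t => G t i j)
    (hGpsd : ∀ t, 0 ≤ t → (G t).PosSemidef)
    (hAsymm : ∀ t, (A t).IsHermitian)
    (hODE : ∀ t, 0 ≤ t → ∀ i j,
      HasDerivAt (fun s => A s i j) (a * (G t * (1 - G t)) i j) t)
    (hA0 : A 0 = G 0) :
    ∀ (i : Fin r) (t : ℝ), 0 ≤ t →
      (∀ s ∈ Set.Icc (0 : ℝ) t, eigMaxOf (G s) ≤ 1 / 2) →
      sortedEigs (G 0) i
          + a * ∫ s in (0 : ℝ)..t, (eigMinOf (G s) - eigMinOf (G s) ^ 2)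
          ≤ sortedEigs (A t) i ∧
      sortedEigs (A t) i
          ≤ sortedEigs (G 0) i
            + a * ∫ s in (0 : ℝ)..t, (eigMaxOf (G s) - eigMaxOf (G s) ^ 2) := by
  intro i t ht hsmall
  have : NeZero r := ⟨i.pos.ne'⟩
  have hGherm : ∀ s ∈ Set.Icc 0 t, (G s).IsHermitian := fun s hs => (hGpsd s hs.1).1
  have hG : Continuous G := continuous_pi fun p => continuous_pi (hGcont p)
  have hmin : ContinuousOn (fun s => eigMinOf (G s)) (Set.Icc 0 t) :=
    (hG.continuousOn.sortedEigs hGherm ⊥).congr fun s hs =>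
      eigMinOf_eq_sortedEigs_bot (hGherm s hs)
  have hmax : ContinuousOn (fun s => eigMaxOf (G s)) (Set.Icc 0 t) :=
    (hG.continuousOn.sortedEigs hGherm ⊤).congr fun s hs =>
      eigMaxOf_eq_sortedEigs_top (hGherm s hs)
  have hderiv : ∀ s ∈ Set.Icc 0 t, ∀ p q,
      HasDerivAt (fun s => A s p q) ((a • (G s * (1 - G s))) p q) s :=
    fun s hs => hODE s hs.1
  have hbounds s (hs : s ∈ Set.Icc 0 t) :=
    dotProduct_smul_mul_one_sub_mulVec_bounds (hGherm s hs) (hsmall s hs) ha.le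
  rw [← intervalIntegral.integral_const_mul, ← intervalIntegral.integral_const_mul, ← hA0]
  refine ⟨add_integral_le_sortedEigs ht (hAsymm 0) (hAsymm t) hderiv ?_
      (fun s hs x => (hbounds s hs x).1) i,
    sortedEigs_le_add_integral ht (hAsymm 0) (hAsymm t) hderiv ?_
      (fun s hs x => (hbounds s hs x).2) i⟩
  · exact (continuousOn_const.mul (hmin.sub (hmin.pow 2))).integrableOn_Icc
  · exact (continuousOn_const.mul (hmax.sub (hmax.pow 2))).integrableOn_Icc

/-- **Refined matrix Riccati eigenvalue comparison when all eigenvalues of `G`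
stay below `1/2`.** -/
theorem matrix_riccati_eigenvalue_comparison_small
    {r : ℕ} (hr : 0 < r) (a : ℝ) (ha : 0 < a)
    (G A : ℝ → Matrix (Fin r) (Fin r) ℝ)
    (hGcont : ∀ i j, Continuous fun t => G t i j)
    (hGpsd : ∀ t, 0 ≤ t → (G t).PosSemidef)
    (hAsymm : ∀ t, (A t).IsHermitian)
    (hODE : ∀ t, 0 ≤ t → ∀ i j,
      HasDerivAt (fun s => A s i j) (a * (G t * (1 - G t)) i j) t)
    (hA0 : A 0 = G 0) :
    ∀ (i : Fin r) (t : ℝ), 0 ≤ t →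
      (∀ s ∈ Set.Icc (0 : ℝ) t, eigMaxOf (G s) ≤ 1 / 2) →
      sortedEigs (G 0) i
          + a * ∫ s in (0 : ℝ)..t, (eigMinOf (G s) - eigMinOf (G s) ^ 2)
          ≤ sortedEigs (A t) i ∧
      sortedEigs (A t) i
          ≤ sortedEigs (G 0) i
            + a * ∫ s in (0 : ℝ)..t, (eigMaxOf (G s) - eigMaxOf (G s) ^ 2) :=
  matrix_riccati_eigenvalue_comparison_small_general a ha G A hGcont hGpsd hAsymm hODE hA0
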